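/- arXiv:1903.03910 — 2 statements merged into one kernel-verified Lean document; each statement's English description precedes it below -/
import Mathlib

section
/- Let ι be a nonempty finite type and let Ξ be a nonempty, convex, compact subset of the probability simplex on ι consisting only of vectors with all entries strictly positive. Then inf over probability vectors p on ι of (sup over q ∈ Ξ of the cross-entropy −∑_i q i · log (p i)) equals sup over q ∈ Ξ of the entropy −∑_i q i · log (q i). Moreover, any entropy maximizer q* ∈ Ξ attains this common value as the minimizing p. -/
/-- Extended-real negative logarithm: −log x for x > 0, and ⊤ at x = 0
(an impossible event under a positive-probability label incurs infinite log loss). -/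
noncomputable def negLogE (x : ℝ) : EReal :=
  if x = 0 then ⊤ else ((-Real.log x : ℝ) : EReal)

/-- Extended-real cross-entropy −∑_i q i · log (p i) of a predictor p relative to
a label approximator q. -/
noncomputable def crossEntropyE {ι : Type*} [Fintype ι] (p q : ι → ℝ) : EReal :=
  ∑ i, (q i : EReal) * negLogE (p i)

/-!
Gibbs' inequality bounds the entropy `H q = crossEntropy q q` of every `q ∈ Ξ` by its
cross-entropy relative to any predictor `p`, so the minimax value is at least `sup_Ξ H`.
Conversely, let `q*` maximize `H` over the compact set `Ξ`. Since `q*` is positive, `H` is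
differentiable at `q*`, and convexity of `Ξ` gives the first-order condition
`dH(q*)(q - q*) ≤ 0` for `q ∈ Ξ`. On the simplex this derivative is
`crossEntropy q* q - H q*`, so the predictor `q*` has worst-case loss `H q*`.
-/

open Real Finset

theorem EReal.coe_finset_sum {α : Type*} (s : Finset α) (f : α → ℝ) :
    ((∑ i ∈ s, f i : ℝ) : EReal) = ∑ i ∈ s, (f i : EReal) :=
  map_sum (⟨⟨Real.toEReal, EReal.coe_zero⟩, EReal.coe_add⟩ : ℝ →+ EReal) f s

theorem negLogE_of_ne_zero {x : ℝ} (hx : x ≠ 0) : negLogE x = ((-log x : ℝ) : EReal) :=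
  if_neg hx

theorem negLogE_nonneg {x : ℝ} (hx₀ : 0 ≤ x) (hx₁ : x ≤ 1) : 0 ≤ negLogE x := by
  rcases hx₀.eq_or_lt with rfl | hx
  · simp [negLogE]
  · rw [negLogE_of_ne_zero hx.ne']
    exact EReal.coe_nonneg.2 (neg_nonneg.2 (log_nonpos hx.le hx₁))

section CrossEntropy

variable {ι : Type*} [Fintype ι]

noncomputable def crossEntropy (p q : ι → ℝ) : ℝ := -∑ i, q i * log (p i)

theorem crossEntropy_self_eq_sum_negMulLog (q : ι → ℝ) :
    crossEntropy q q = ∑ i, negMulLog (q i) := by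
  simp only [crossEntropy, negMulLog, neg_mul, sum_neg_distrib]

theorem crossEntropyE_of_ne_zero {p : ι → ℝ} (q : ι → ℝ) (hp : ∀ i, p i ≠ 0) :
    crossEntropyE p q = crossEntropy p q := by
  simp only [crossEntropyE, crossEntropy, negLogE_of_ne_zero (hp _), ← EReal.coe_mul,
    ← EReal.coe_finset_sum, mul_neg, sum_neg_distrib]

theorem crossEntropyE_eq_top {p q : ι → ℝ} (hp : p ∈ stdSimplex ℝ ι) (hq : ∀ i, 0 ≤ q i)
    {i : ι} (hpi : p i = 0) (hqi : 0 < q i) : crossEntropyE p q = ⊤ := by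
  have hterm (j : ι) : 0 ≤ (q j : EReal) * negLogE (p j) :=
    EReal.mul_nonneg (EReal.coe_nonneg.2 (hq j))
      (negLogE_nonneg (hp.1 j) (mem_Icc_of_mem_stdSimplex hp j).2)
  refine top_le_iff.1 ?_
  calc ⊤ = (q i : EReal) * negLogE (p i) := by
        rw [negLogE, if_pos hpi, EReal.coe_mul_top_of_pos hqi]
    _ ≤ crossEntropyE p q := single_le_sum (fun j _ => hterm j) (mem_univ i)

theorem crossEntropy_self_le {p q : ι → ℝ} (hp : ∀ i, 0 < p i) (hq : ∀ i, 0 ≤ q i)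
    (hsum : ∑ i, p i = ∑ i, q i) : crossEntropy q q ≤ crossEntropy p q := by
  have key : ∀ i, q i * log (p i) - q i * log (q i) ≤ p i - q i := fun i => by
    rcases (hq i).eq_or_lt with h | h
    · simp [← h, (hp i).le]
    · have hlog := mul_le_mul_of_nonneg_left (log_le_sub_one_of_pos (div_pos (hp i) h)) h.le
      rwa [log_div (hp i).ne' h.ne', mul_sub, mul_sub, mul_div_cancel₀ _ h.ne', mul_one] at hlog
  have hsum' := sum_le_sum fun i (_ : i ∈ univ) => key i
  rw [sum_sub_distrib, sum_sub_distrib, hsum, sub_self] at hsum'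
  simp only [crossEntropy]
  linarith

theorem crossEntropy_self_le_crossEntropyE {p q : ι → ℝ} (hp : p ∈ stdSimplex ℝ ι)
    (hq : q ∈ stdSimplex ℝ ι) (hq₀ : ∀ i, 0 < q i) :
    (crossEntropy q q : EReal) ≤ crossEntropyE p q := by
  by_cases hp₀ : ∀ i, p i ≠ 0
  · rw [crossEntropyE_of_ne_zero q hp₀]
    exact EReal.coe_le_coe_iff.2 <| crossEntropy_self_le
      (fun i => (hp.1 i).lt_of_ne' (hp₀ i)) hq.1 (hp.2.trans hq.2.symm)
  · obtain ⟨i, hpi⟩ := not_forall_not.1 hp₀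
    rw [crossEntropyE_eq_top hp hq.1 hpi (hq₀ i)]
    exact le_top

theorem hasFDerivAt_crossEntropy_self {q : ι → ℝ} (hq : ∀ i, q i ≠ 0) :
    HasFDerivAt (fun q => crossEntropy q q)
      (∑ i, (-log (q i) - 1) • ContinuousLinearMap.proj (R := ℝ) (φ := fun _ : ι => ℝ) i) q := by
  simp only [crossEntropy_self_eq_sum_negMulLog]
  exact HasFDerivAt.fun_sum fun i _ =>
    (hasDerivAt_negMulLog (hq i)).comp_hasFDerivAt (f := fun q : ι → ℝ => q i) q
      (hasFDerivAt_apply i q)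

theorem crossEntropy_le_of_isMaxOn {Ξ : Set (ι → ℝ)} (hconv : Convex ℝ Ξ) {qs q : ι → ℝ}
    (hqs : qs ∈ Ξ) (hq : q ∈ Ξ) (hqs₀ : ∀ i, qs i ≠ 0) (hsum : ∑ i, q i = ∑ i, qs i)
    (hmax : IsMaxOn (fun q => crossEntropy q q) Ξ qs) :
    crossEntropy qs q ≤ crossEntropy qs qs := by
  have hfermat := hmax.localize.hasFDerivWithinAt_nonpos
    (hasFDerivAt_crossEntropy_self hqs₀).hasFDerivWithinAt
    (sub_mem_posTangentConeAt_of_segment_subset (hconv.segment_subset hqs hq))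
  simp only [FunLike.coe_sum, FunLike.coe_smul, Finset.sum_apply, Pi.smul_apply,
    ContinuousLinearMap.proj_apply, Pi.sub_apply, smul_eq_mul] at hfermat
  have hexpand : ∑ i, (-log (qs i) - 1) * (q i - qs i)
      = crossEntropy qs q - crossEntropy qs qs - (∑ i, q i - ∑ i, qs i) := by
    simp only [crossEntropy, ← sum_sub_distrib, ← sum_neg_distrib]
    exact sum_congr rfl fun i _ => by ring
  linarith

theorem continuous_crossEntropy_self : Continuous fun q : ι → ℝ => crossEntropy q q := by
  simp only [crossEntropy_self_eq_sum_negMulLog]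
  fun_prop

theorem iSup_crossEntropyE_eq_of_isMaxOn {Ξ : Set (ι → ℝ)} (hconv : Convex ℝ Ξ)
    (hsub : Ξ ⊆ stdSimplex ℝ ι) {qs : ι → ℝ} (hqs : qs ∈ Ξ) (hqs₀ : ∀ i, qs i ≠ 0)
    (hmax : IsMaxOn (fun q => crossEntropy q q) Ξ qs) :
    ⨆ q ∈ Ξ, crossEntropyE qs q = ⨆ q ∈ Ξ, (crossEntropy q q : EReal) := by
  simp only [crossEntropyE_of_ne_zero _ hqs₀]
  refine le_antisymm (iSup₂_le fun q hq => ?_) (iSup₂_le fun q hq => ?_)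
  · exact le_iSup₂_of_le qs hqs <| EReal.coe_le_coe_iff.2 <|
      crossEntropy_le_of_isMaxOn hconv hqs hq hqs₀ ((hsub hq).2.trans (hsub hqs).2.symm) hmax
  · exact le_iSup₂_of_le qs hqs <| EReal.coe_le_coe_iff.2 (hmax hq)

end CrossEntropy

theorem robust_log_loss_eq_max_entropy_general {ι : Type*} [Fintype ι]
    (Ξ : Set (ι → ℝ)) (hne : Ξ.Nonempty) (hconv : Convex ℝ Ξ)
    (hcomp : IsCompact Ξ) (hsub : Ξ ⊆ stdSimplex ℝ ι)
    (hpos : ∀ q ∈ Ξ, ∀ i, 0 < q i) :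
    (⨅ p ∈ stdSimplex ℝ ι, ⨆ q ∈ Ξ, crossEntropyE p q)
        = ⨆ q ∈ Ξ, ((-∑ i, q i * Real.log (q i) : ℝ) : EReal) ∧
    ∀ qs ∈ Ξ,
      (∀ q ∈ Ξ, (-∑ i, q i * Real.log (q i)) ≤ -∑ i, qs i * Real.log (qs i)) →
      (⨆ q ∈ Ξ, crossEntropyE qs q)
        = ⨆ q ∈ Ξ, ((-∑ i, q i * Real.log (q i) : ℝ) : EReal) := by
  have hminimax : ∀ qs ∈ Ξ, IsMaxOn (fun q => crossEntropy q q) Ξ qs →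
      ⨆ q ∈ Ξ, crossEntropyE qs q = ⨆ q ∈ Ξ, (crossEntropy q q : EReal) := fun qs hqs hmax =>
    iSup_crossEntropyE_eq_of_isMaxOn hconv hsub hqs (fun i => (hpos qs hqs i).ne') hmax
  obtain ⟨qs, hqs, hmax⟩ := hcomp.exists_isMaxOn hne continuous_crossEntropy_self.continuousOn
  refine ⟨le_antisymm ?_ ?_, hminimax⟩
  · exact iInf₂_le_of_le qs (hsub hqs) (hminimax qs hqs hmax).le
  · exact le_iInf₂ fun p hp => iSup₂_mono fun q hq =>
      crossEntropy_self_le_crossEntropyE hp (hsub hq) (hpos q hq)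

/-- Robust log-loss minimization over a convex compact set Ξ of strictly positive
probability vectors equals entropy maximization over Ξ (Eq. (6)); moreover any
entropy maximizer in Ξ attains the common value as the minimizing predictor. -/
theorem robust_log_loss_eq_max_entropy {ι : Type*} [Fintype ι] [Nonempty ι]
    (Ξ : Set (ι → ℝ)) (hne : Ξ.Nonempty) (hconv : Convex ℝ Ξ)
    (hcomp : IsCompact Ξ) (hsub : Ξ ⊆ stdSimplex ℝ ι)
    (hpos : ∀ q ∈ Ξ, ∀ i, 0 < q i) :
    (⨅ p ∈ stdSimplex ℝ ι, ⨆ q ∈ Ξ, crossEntropyE p q)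
        = ⨆ q ∈ Ξ, ((-∑ i, q i * Real.log (q i) : ℝ) : EReal) ∧
    ∀ qs ∈ Ξ,
      (∀ q ∈ Ξ, (-∑ i, q i * Real.log (q i)) ≤ -∑ i, qs i * Real.log (qs i)) →
      (⨆ q ∈ Ξ, crossEntropyE qs q)
        = ⨆ q ∈ Ξ, ((-∑ i, q i * Real.log (q i) : ℝ) : EReal) :=
  robust_log_loss_eq_max_entropy_general Ξ hne hconv hcomp hsub hpos
end

section
/- Let d be a natural number, u, v, w ∈ ℝ^d, and t > 0 a real. Define Z(θ) = exp(⟨θ, u⟩) + exp(⟨θ, v⟩) and the piecewise function ℓ(θ) = (if exp(⟨θ, u⟩)/Z(θ) > t then −log t + ⟨θ, u⟩ else log Z(θ)) − ⟨θ, w⟩. Then for all θ ∈ ℝ^d, ℓ(θ) = max{ log Z(θ), ⟨θ, u⟩ − log t } − ⟨θ, w⟩, and ℓ is convex on ℝ^d. -/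
lemma sum_lin (d : ℕ) (u x y : Fin d → ℝ) (α β : ℝ) :
    ∑ j, (α • x + β • y) j * u j
      = α * ∑ j, x j * u j + β * ∑ j, y j * u j := by
  simp [Finset.mul_sum, ← Finset.sum_add_distrib, add_mul, mul_assoc]

lemma holder2 {A B C D α β : ℝ} (hA : 0 < A) (hB : 0 < B) (hC : 0 < C) (hD : 0 < D)
    (hα : 0 ≤ α) (hβ : 0 ≤ β) (hαβ : α + β = 1) :
    A ^ α * B ^ β + C ^ α * D ^ β ≤ (A + C) ^ α * (B + D) ^ β := by
  have hS : 0 < A + C := by linarith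
  have hT : 0 < B + D := by linarith
  have hP : 0 < (A + C) ^ α * (B + D) ^ β := by positivity
  have h1 := Real.geom_mean_le_arith_mean2_weighted hα hβ
    (div_nonneg hA.le hS.le) (div_nonneg hB.le hT.le) hαβ
  have h2 := Real.geom_mean_le_arith_mean2_weighted hα hβ
    (div_nonneg hC.le hS.le) (div_nonneg hD.le hT.le) hαβ
  have e1 : (A / (A + C)) ^ α * (B / (B + D)) ^ β
      = (A ^ α * B ^ β) / ((A + C) ^ α * (B + D) ^ β) := by
    rw [Real.div_rpow hA.le hS.le, Real.div_rpow hB.le hT.le]; ring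
  have e2 : (C / (A + C)) ^ α * (D / (B + D)) ^ β
      = (C ^ α * D ^ β) / ((A + C) ^ α * (B + D) ^ β) := by
    rw [Real.div_rpow hC.le hS.le, Real.div_rpow hD.le hT.le]; ring
  rw [e1] at h1; rw [e2] at h2
  have hsum : (A ^ α * B ^ β) / ((A + C) ^ α * (B + D) ^ β)
      + (C ^ α * D ^ β) / ((A + C) ^ α * (B + D) ^ β) ≤ 1 := by
    have hAC : A / (A + C) + C / (A + C) = 1 := by field_simp
    have hBD : B / (B + D) + D / (B + D) = 1 := by field_simp
    have hrhs : α * (A / (A + C)) + β * (B / (B + D))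
        + (α * (C / (A + C)) + β * (D / (B + D))) = 1 := by
      calc α * (A / (A + C)) + β * (B / (B + D))
          + (α * (C / (A + C)) + β * (D / (B + D)))
          = α * (A / (A + C) + C / (A + C)) + β * (B / (B + D) + D / (B + D)) := by ring
        _ = 1 := by rw [hAC, hBD]; linarith
    linarith
  rw [← add_div, div_le_one hP] at hsum
  exact hsum

lemma lse_convex (d : ℕ) (u v : Fin d → ℝ) :
    ConvexOn ℝ Set.univ (fun θ : Fin d → ℝ =>
      Real.log (Real.exp (∑ j, θ j * u j) + Real.exp (∑ j, θ j * v j))) := by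
  refine ⟨convex_univ, ?_⟩
  intro x _ y _ α β hα hβ hαβ
  simp only [smul_eq_mul, sum_lin]
  set ax := ∑ j, x j * u j
  set ay := ∑ j, y j * u j
  set bx := ∑ j, x j * v j
  set by' := ∑ j, y j * v j
  have hZx : 0 < Real.exp ax + Real.exp bx := by positivity
  have hZy : 0 < Real.exp ay + Real.exp by' := by positivity
  have key : Real.exp (α * ax + β * ay) + Real.exp (α * bx + β * by')
      ≤ (Real.exp ax + Real.exp bx) ^ α * (Real.exp ay + Real.exp by') ^ β := by
    have e1 : Real.exp (α * ax + β * ay) = (Real.exp ax) ^ α * (Real.exp ay) ^ β := by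
      rw [Real.exp_add, mul_comm α ax, mul_comm β ay, Real.exp_mul, Real.exp_mul]
    have e2 : Real.exp (α * bx + β * by') = (Real.exp bx) ^ α * (Real.exp by') ^ β := by
      rw [Real.exp_add, mul_comm α bx, mul_comm β by', Real.exp_mul, Real.exp_mul]
    rw [e1, e2]
    exact holder2 (Real.exp_pos _) (Real.exp_pos _) (Real.exp_pos _) (Real.exp_pos _)
      hα hβ hαβ
  calc Real.log (Real.exp (α * ax + β * ay) + Real.exp (α * bx + β * by'))
      ≤ Real.log ((Real.exp ax + Real.exp bx) ^ α * (Real.exp ay + Real.exp by') ^ β) :=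
        Real.log_le_log (by positivity) key
    _ = α * Real.log (Real.exp ax + Real.exp bx)
        + β * Real.log (Real.exp ay + Real.exp by') := by
        rw [Real.log_mul (by positivity) (by positivity),
          Real.log_rpow hZx, Real.log_rpow hZy]

lemma affine_convex (d : ℕ) (u : Fin d → ℝ) (c : ℝ) :
    ConvexOn ℝ Set.univ (fun θ : Fin d → ℝ => (∑ j, θ j * u j) + c) := by
  refine ⟨convex_univ, ?_⟩
  intro x _ y _ α β hα hβ hαβ
  simp only [smul_eq_mul, sum_lin]
  have : α * c + β * c = c := by rw [← add_mul, hαβ, one_mul]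
  nlinarith [this]

/-- The per-example truncated loss of Theorem 2 equals a maximum of two affine/convex
functions minus an affine function, and is convex in θ. -/
theorem truncated_loss_convex (d : ℕ) (u v w : Fin d → ℝ) (t : ℝ) (ht : 0 < t)
    (Z : (Fin d → ℝ) → ℝ)
    (hZ : ∀ θ, Z θ = Real.exp (∑ j, θ j * u j) + Real.exp (∑ j, θ j * v j))
    (ℓ : (Fin d → ℝ) → ℝ)
    (hℓ : ∀ θ, ℓ θ =
      (if t < Real.exp (∑ j, θ j * u j) / Z θ
        then -Real.log t + ∑ j, θ j * u j
        else Real.log (Z θ)) - ∑ j, θ j * w j) :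
    (∀ θ, ℓ θ = max (Real.log (Z θ)) ((∑ j, θ j * u j) - Real.log t) - ∑ j, θ j * w j) ∧
    ConvexOn ℝ Set.univ ℓ := by
  have hZpos : ∀ θ, 0 < Z θ := by
    intro θ; rw [hZ θ]; positivity
  have heq : ∀ θ, ℓ θ = max (Real.log (Z θ)) ((∑ j, θ j * u j) - Real.log t)
      - ∑ j, θ j * w j := by
    intro θ
    rw [hℓ θ]
    congr 1
    set a := ∑ j, θ j * u j
    by_cases h : t < Real.exp a / Z θ
    · rw [if_pos h]
      have h1 : t * Z θ < Real.exp a := (lt_div_iff₀ (hZpos θ)).mp h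
      have h2 : Real.log t + Real.log (Z θ) < a := by
        have := Real.log_lt_log (mul_pos ht (hZpos θ)) h1
        rwa [Real.log_mul (ne_of_gt ht) (ne_of_gt (hZpos θ)), Real.log_exp] at this
      rw [max_eq_right (by linarith)]
      ring
    · rw [if_neg h]
      push_neg at h
      have h1 : Real.exp a ≤ t * Z θ := (div_le_iff₀ (hZpos θ)).mp h
      have h2 : a ≤ Real.log t + Real.log (Z θ) := by
        have := Real.log_le_log (Real.exp_pos a) h1
        rwa [Real.log_mul (ne_of_gt ht) (ne_of_gt (hZpos θ)), Real.log_exp] at this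
      rw [max_eq_left (by linarith)]
  refine ⟨heq, ?_⟩
  have hfun : ℓ = fun θ =>
      (max (Real.log (Real.exp (∑ j, θ j * u j) + Real.exp (∑ j, θ j * v j)))
        ((∑ j, θ j * u j) + (-Real.log t))) + ((∑ j, θ j * (-w j)) + 0) := by
    funext θ
    rw [heq θ, hZ θ]
    simp [sub_eq_add_neg, Finset.sum_neg_distrib, mul_neg]
  rw [hfun]
  exact ((lse_convex d u v).sup (affine_convex d u (-Real.log t))).add
    (affine_convex d (fun j => -w j) 0)
end
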